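/- Let τ = (√5+1)/2 be the golden ratio. Then lim_{n→∞} η_n = √(2+√5), where η_n = β_n^{1/2} + β_n^{−1/2} and β_n is the unique positive root of φ_n(x) = x^{n+1} − (1 + x + x² + ⋯ + x^{n−1}). In particular: (a) for each n ≥ 1, φ_n has exactly one positive root β_n; (b) the sequence (β_n) is strictly increasing and converges to τ; (c) hence η_n → τ^{1/2} + τ^{−1/2} = √(2+√5). -/

import Mathlib

open Filter

/-- Hoffman's polynomial `φ_n(x) = x^{n+1} - (1 + x + ⋯ + x^{n-1})`. -/
noncomputable def hoffPoly (n : ℕ) (x : ℝ) : ℝ :=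
  x^(n+1) - ∑ k ∈ Finset.range n, x^k

/-- The golden ratio `τ = (√5 + 1)/2`. -/
noncomputable def tau : ℝ := (Real.sqrt 5 + 1) / 2

/-!
For `x ≠ 0`, `φ_n(x) = x^{n+1} (1 - S_n(x))` with `S_n(x) = ∑_{k<n} x^{-(k+2)}` (`hoffSum`), so
the positive roots of `φ_n` are the solutions of `S_n(x) = 1`. As `S_n` is strictly decreasing
on `(0, ∞)`, there is at most one, and comparing `S_n` with `1` locates it: `S_{n+1}(β_n) > 1`
gives `β_n < β_{n+1}`. Writing `y = x⁻¹`, `S_n(x) (1 - y) = y² - y^{n+2}`; since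
`τ⁻² = 1 - τ⁻¹` this gives `S_n(τ) < 1`, i.e. `β_n < τ`, while for `1 < x < τ` we have
`y² > 1 - y`, so `S_n(x) > 1` for large `n`, i.e. `x < β_n`. Finally
`(√τ + 1/√τ)² = τ + 2 + τ⁻¹ = 2τ + 1 = 2 + √5`.
-/

open Finset Set

noncomputable def hoffSum (n : ℕ) (x : ℝ) : ℝ := ∑ k ∈ range n, x⁻¹ ^ (k + 2)

lemma one_lt_tau : 1 < tau := by
  have h5 : (2 : ℝ) < Real.sqrt 5 := by
    rw [show (2 : ℝ) = Real.sqrt (2 ^ 2) by simp]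
    exact Real.sqrt_lt_sqrt (by norm_num) (by norm_num)
  unfold tau
  linarith

lemma tau_pos : 0 < tau := one_pos.trans one_lt_tau

lemma tau_sq : tau ^ 2 = tau + 1 := by
  unfold tau
  nlinarith [Real.sq_sqrt (show (0 : ℝ) ≤ 5 by norm_num)]

lemma inv_tau_sq : tau⁻¹ ^ 2 = 1 - tau⁻¹ := by
  have h := tau_pos.ne'
  field_simp
  linarith [tau_sq]

lemma sqrt_tau_add_inv_sqrt_tau :
    Real.sqrt tau + 1 / Real.sqrt tau = Real.sqrt (2 + Real.sqrt 5) := by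
  have hsq : (Real.sqrt tau + 1 / Real.sqrt tau) ^ 2 = 2 + Real.sqrt 5 := by
    have hτ := tau_pos
    have hs : Real.sqrt tau ^ 2 = tau := Real.sq_sqrt hτ.le
    have hs0 : Real.sqrt tau ≠ 0 := (Real.sqrt_pos.2 hτ).ne'
    field_simp
    rw [hs, show 2 + Real.sqrt 5 = 2 * tau + 1 by unfold tau; ring]
    linear_combination -tau_sq
  rw [← hsq, Real.sqrt_sq (by positivity)]

lemma pow_mul_hoffSum (n : ℕ) {x : ℝ} (hx : x ≠ 0) :
    x ^ (n + 1) * hoffSum n x = ∑ k ∈ range n, x ^ k := by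
  rw [hoffSum, mul_sum, ← sum_range_reflect (fun k => x ^ k) n]
  refine sum_congr rfl fun k hk => ?_
  have hk : k < n := mem_range.1 hk
  rw [inv_pow, show n - 1 - k = n + 1 - (k + 2) by omega, pow_sub₀ x hx (by omega)]

lemma hoffPoly_eq_zero_iff (n : ℕ) {x : ℝ} (hx : x ≠ 0) :
    hoffPoly n x = 0 ↔ hoffSum n x = 1 := by
  rw [hoffPoly, ← pow_mul_hoffSum n hx, ← mul_one_sub, mul_eq_zero,
    or_iff_right (pow_ne_zero _ hx), sub_eq_zero, eq_comm]

lemma hoffSum_succ (n : ℕ) (x : ℝ) : hoffSum (n + 1) x = hoffSum n x + x⁻¹ ^ (n + 2) :=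
  sum_range_succ _ n

lemma hoffSum_mul_one_sub_inv (n : ℕ) (x : ℝ) :
    hoffSum n x * (1 - x⁻¹) = x⁻¹ ^ 2 - x⁻¹ ^ (n + 2) := by
  induction n with
  | zero => simp [hoffSum]
  | succ n ih =>
    rw [hoffSum_succ, add_mul, ih]
    ring

lemma hoffSum_strictAntiOn {n : ℕ} (hn : 0 < n) : StrictAntiOn (hoffSum n) (Ioi 0) := by
  intro x hx y hy hxy
  refine sum_lt_sum_of_nonempty (nonempty_range_iff.2 hn.ne') fun k _ => ?_
  have : y⁻¹ < x⁻¹ := inv_strictAntiOn hx hy hxy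
  exact pow_lt_pow_left₀ this (by simpa using hy.le) (by omega)

lemma hoffSum_tau_lt_one (n : ℕ) : hoffSum n tau < 1 := by
  have hτ := tau_pos
  have h := hoffSum_mul_one_sub_inv n tau
  rw [← inv_tau_sq] at h
  refine lt_of_mul_lt_mul_right (a := tau⁻¹ ^ 2) ?_ (by positivity)
  rw [h, one_mul, sub_lt_self_iff]
  positivity

lemma eventually_one_lt_hoffSum {x : ℝ} (hx : 1 < x) (hxτ : x < tau) :
    ∀ᶠ n in atTop, 1 < hoffSum n x := by
  set y := x⁻¹
  have hy0 : 0 < y := inv_pos.2 (one_pos.trans hx)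
  have hy1 : y < 1 := inv_lt_one_of_one_lt₀ hx
  have hτy : tau⁻¹ < y := inv_strictAntiOn (one_pos.trans hx) tau_pos hxτ
  have hgap : 1 - y < y ^ 2 := by
    have : tau⁻¹ ^ 2 < y ^ 2 := by have := tau_pos; gcongr
    linarith [inv_tau_sq]
  have hlim : Tendsto (fun n => y ^ 2 - y ^ (n + 2)) atTop (nhds (y ^ 2 - 0)) :=
    tendsto_const_nhds.sub ((tendsto_add_atTop_iff_nat 2).2
      (tendsto_pow_atTop_nhds_zero_of_lt_one hy0.le hy1))
  filter_upwards [hlim.eventually_const_lt (by simpa using hgap)] with n hn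
  rw [← hoffSum_mul_one_sub_inv] at hn
  exact lt_of_mul_lt_mul_right (by simpa using hn) (sub_pos.2 hy1).le

lemma lt_iff_one_lt_hoffSum {n : ℕ} (hn : 0 < n) {x r : ℝ} (hx : 0 < x) (hr : 0 < r)
    (hroot : hoffSum n r = 1) : x < r ↔ 1 < hoffSum n x := by
  rw [← hroot]
  exact ((hoffSum_strictAntiOn hn).lt_iff_gt hr hx).symm

lemma lt_of_hoffSum_eq_one_of_hoffSum_succ_eq_one {n : ℕ} {r s : ℝ} (hr : 0 < r) (hs : 0 < s)
    (hr1 : hoffSum n r = 1) (hs1 : hoffSum (n + 1) s = 1) : r < s := by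
  rw [lt_iff_one_lt_hoffSum n.succ_pos hr hs hs1, hoffSum_succ, hr1, lt_add_iff_pos_right]
  positivity

lemma lt_tau_of_hoffSum_eq_one {n : ℕ} (hn : 0 < n) {r : ℝ} (hr : 0 < r)
    (hr1 : hoffSum n r = 1) : r < tau := by
  rw [← (hoffSum_strictAntiOn hn).lt_iff_gt tau_pos hr, hr1]
  exact hoffSum_tau_lt_one n

lemma tendsto_tau_of_hoffSum_eq_one {β : ℕ → ℝ}
    (hβ : ∀ n, 0 < n → 0 < β n ∧ hoffSum n (β n) = 1) : Tendsto β atTop (nhds tau) := by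
  refine tendsto_order.2 ⟨fun b hb => ?_, fun b hb => ?_⟩
  · obtain ⟨c, hbc, hcτ⟩ := exists_between (max_lt hb one_lt_tau)
    have hc1 : 1 < c := (le_max_right b 1).trans_lt hbc
    filter_upwards [eventually_one_lt_hoffSum hc1 hcτ, eventually_gt_atTop 0] with n hn hn0
    have hcβ := (lt_iff_one_lt_hoffSum hn0 (one_pos.trans hc1) (hβ n hn0).1 (hβ n hn0).2).2 hn
    exact (le_max_left b 1).trans_lt (hbc.trans hcβ)
  · filter_upwards [eventually_gt_atTop 0] with n hn
    exact (lt_tau_of_hoffSum_eq_one hn (hβ n hn).1 (hβ n hn).2).trans hb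

theorem stmt18 (β : ℕ → ℝ)
    (hβ : ∀ n, 1 ≤ n → 0 < β n ∧ hoffPoly n (β n) = 0) :
    -- (a) each `φ_n` has exactly one positive root
    (∀ n, 1 ≤ n → ∃! x : ℝ, 0 < x ∧ hoffPoly n x = 0) ∧
    -- (b) the sequence `(β_n)` is strictly increasing and converges to `τ`
    (∀ m n, 1 ≤ m → m < n → β m < β n) ∧
    Tendsto β atTop (nhds tau) ∧
    -- (c) hence `η_n = β_n^{1/2} + β_n^{-1/2} → τ^{1/2} + τ^{-1/2} = √(2+√5)`
    Tendsto (fun n => Real.sqrt (β n) + 1 / Real.sqrt (β n)) atTop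
      (nhds (Real.sqrt tau + 1 / Real.sqrt tau)) ∧
    Real.sqrt tau + 1 / Real.sqrt tau = Real.sqrt (2 + Real.sqrt 5) := by
  have hS (n : ℕ) (hn : 0 < n) : 0 < β n ∧ hoffSum n (β n) = 1 :=
    ⟨(hβ n hn).1, (hoffPoly_eq_zero_iff n (hβ n hn).1.ne').1 (hβ n hn).2⟩
  have hunique (n : ℕ) (hn : 1 ≤ n) : ∃! x : ℝ, 0 < x ∧ hoffPoly n x = 0 := by
    refine ⟨β n, hβ n hn, fun x ⟨hx, hx0⟩ => (hoffSum_strictAntiOn hn).injOn hx (hS n hn).1 ?_⟩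
    rw [(hoffPoly_eq_zero_iff n hx.ne').1 hx0, (hS n hn).2]
  have hmono : StrictMonoOn β (Ici 1) := strictMonoOn_of_lt_succ ordConnected_Ici
    fun n _ hn _ => lt_of_hoffSum_eq_one_of_hoffSum_succ_eq_one (hS n hn).1
      (hS (n + 1) n.succ_pos).1 (hS n hn).2 (hS (n + 1) n.succ_pos).2
  have hlim := tendsto_tau_of_hoffSum_eq_one hS
  have hsqrt := hlim.sqrt
  refine ⟨hunique, fun m n hm hmn => hmono hm (hm.trans hmn.le) hmn, hlim,
    hsqrt.add (tendsto_const_nhds.div hsqrt (Real.sqrt_pos.2 tau_pos).ne'),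
    sqrt_tau_add_inv_sqrt_tau⟩
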